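/- arXiv:1208.3183 — 6 statements merged into one kernel-verified Lean document; each statement's English description precedes it below -/
import Mathlib

section
/- Fix m > 0 and for E ∈ ℝ define Γ_E(Q₁,Q₂,P₁,P₂) = (1/16)Q₂²P₁² + (1/(16m))Q₁²P₂² − (1/2)m²Q₁² − (1/2)Q₂² − 4mQ₁²Q₂²/√(Q₁⁴+Q₂⁴) − EQ₁²Q₂². If γ(s) = (Q₁(s), Q₂(s), P₁(s), P₂(s)) is a solution of the Hamiltonian system z' = J∇Γ_E(z) on an interval avoiding Q₁ = Q₂ = 0, then for every ε > 0 the rescaled curve γ_ε(s) = (εQ₁(εs), εQ₂(εs), P₁(εs), P₂(εs)) is a solution of the Hamiltonian system z' = J∇Γ_{E/ε²}(z) with energy parameter E/ε². -/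
open Matrix

noncomputable section

/-- The gradient of `f : (ι → ℝ) → ℝ` as the vector of partial derivatives. -/
def grad {ι : Type*} [Fintype ι] [DecidableEq ι] (f : (ι → ℝ) → ℝ) (z : ι → ℝ) : ι → ℝ :=
  fun i => fderiv ℝ f z (Pi.single i 1)

/-- The standard `2n × 2n` symplectic matrix `[[0, I], [-I, 0]]`. -/
def Jmat (n : ℕ) : Matrix (Fin n ⊕ Fin n) (Fin n ⊕ Fin n) ℝ :=
  Matrix.fromBlocks 0 1 (-1) 0

/-- The regularized two-degree-of-freedom rhomboidal Hamiltonian in extended phase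
space, with mass parameter `m` and energy parameter `E`.  Coordinates are ordered
`(Q₁, Q₂, P₁, P₂)`, with `Q₁ = z (Sum.inl 0)`, `Q₂ = z (Sum.inl 1)`,
`P₁ = z (Sum.inr 0)`, `P₂ = z (Sum.inr 1)`. -/
def Gamma2 (m E : ℝ) (z : (Fin 2 ⊕ Fin 2) → ℝ) : ℝ :=
  (1 / 16) * (z (Sum.inl 1)) ^ 2 * (z (Sum.inr 0)) ^ 2
    + (1 / (16 * m)) * (z (Sum.inl 0)) ^ 2 * (z (Sum.inr 1)) ^ 2
    - (1 / 2) * m ^ 2 * (z (Sum.inl 0)) ^ 2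
    - (1 / 2) * (z (Sum.inl 1)) ^ 2
    - 4 * m * (z (Sum.inl 0)) ^ 2 * (z (Sum.inl 1)) ^ 2
        / Real.sqrt ((z (Sum.inl 0)) ^ 4 + (z (Sum.inl 1)) ^ 4)
    - E * (z (Sum.inl 0)) ^ 2 * (z (Sum.inl 1)) ^ 2

/-!
Scaling `Q` by `ε` and `E` by `ε⁻²` multiplies `Γ_E` by `ε²`: the kinetic terms carry a factor
`Q²`, and the potential terms are homogeneous of degree two in `Q` (the `E`-term of degree four,
compensated by `E / ε²`). Differentiating this identity through the linear change of variables
gives `∇_Q Γ_{E/ε²}(εQ, P) = ε ∇_Q Γ_E(Q, P)` and `∇_P Γ_{E/ε²}(εQ, P) = ε² ∇_P Γ_E(Q, P)`, and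
the extra factor `ε` from reparametrising time by `s ↦ εs` balances exactly the two blocks of
`J ∇Γ`.
-/

open Real

variable {n : ℕ}

lemma Jmat_mulVec (v : Fin n ⊕ Fin n → ℝ) :
    (Jmat n) *ᵥ v = Sum.elim (fun i => v (Sum.inr i)) (fun i => -v (Sum.inl i)) := by
  have hv : v = Sum.elim (fun i => v (Sum.inl i)) (fun i => v (Sum.inr i)) := by
    funext j; cases j <;> rfl
  rw [Jmat, hv, fromBlocks_mulVec]
  ext (i | i) <;> simp [neg_mulVec]

lemma grad_const_mul {ι : Type*} [Fintype ι] [DecidableEq ι] (c : ℝ) (f : (ι → ℝ) → ℝ)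
    (z : ι → ℝ) : grad (fun x => c * f x) z = c • grad f z := by
  ext i
  change fderiv ℝ (c • f) z _ = _
  rw [fderiv_const_smul_field]
  rfl

lemma grad_comp_mul_left {ι : Type*} [Fintype ι] [DecidableEq ι] (f : (ι → ℝ) → ℝ)
    {d : ι → ℝ} (hd : ∀ i, d i ≠ 0) (z : ι → ℝ) (i : ι) :
    grad (fun x => f (d * x)) z i = d i * grad f (d * z) i := by
  let L : (ι → ℝ) ≃L[ℝ] (ι → ℝ) := ContinuousLinearEquiv.piCongrRight fun j =>
    ContinuousLinearEquiv.unitsEquivAut ℝ (Units.mk0 (d j) (hd j))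
  have hL : ∀ x, L x = d * x := fun x => by ext j; exact mul_comm _ _
  have hcomp : (fun x => f (d * x)) = f ∘ L := by ext x; simp only [Function.comp, hL]
  have hsingle : L (Pi.single i 1) = d i • Pi.single i 1 := by
    rw [hL, ← Pi.single_smul', smul_eq_mul, mul_one]
    ext j; rcases eq_or_ne j i with rfl | hj <;> simp [*]
  simp only [grad, hcomp, L.comp_right_fderiv, ContinuousLinearMap.comp_apply,
    ContinuousLinearEquiv.coe_coe, hsingle, map_smul, smul_eq_mul, hL]

def phaseWeight (a b : ℝ) : Fin n ⊕ Fin n → ℝ :=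
  Sum.elim (fun _ => a) (fun _ => b)

lemma phaseWeight_mul (a b : ℝ) (z : Fin n ⊕ Fin n → ℝ) :
    phaseWeight a b * z = Sum.elim (fun i => a * z (Sum.inl i)) (fun i => b * z (Sum.inr i)) := by
  ext (i | i) <;> rfl

theorem hasDerivAt_phaseWeight_mul_comp_mul {H H' : (Fin n ⊕ Fin n → ℝ) → ℝ} {a b c : ℝ}
    (ha : a ≠ 0) (hb : b ≠ 0) (hH : ∀ z, H' (phaseWeight a b * z) = a * b * c * H z)
    {γ : ℝ → Fin n ⊕ Fin n → ℝ} {s : ℝ}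
    (hγ : HasDerivAt γ ((Jmat n) *ᵥ grad H (γ (c * s))) (c * s)) :
    HasDerivAt (fun t => phaseWeight a b * γ (c * t))
      ((Jmat n) *ᵥ grad H' (phaseWeight a b * γ (c * s))) s := by
  set z := γ (c * s)
  have hw : ∀ j, phaseWeight (n := n) a b j ≠ 0 := by rintro (j | j) <;> assumption
  have hgrad : ∀ j, phaseWeight a b j * grad H' (phaseWeight a b * z) j
      = a * b * c * grad H z j := fun j => by
    rw [← grad_comp_mul_left H' hw, funext hH, grad_const_mul, Pi.smul_apply, smul_eq_mul]
  have htime : HasDerivAt (fun t => γ (c * t)) (c • (Jmat n *ᵥ grad H z)) s :=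
    hγ.scomp s ((hasDerivAt_id s).const_mul c |>.congr_deriv (mul_one c))
  refine (htime.const_mul (phaseWeight a b)).congr_deriv ?_
  funext j
  rcases j with i | i
  · have h := hgrad (Sum.inr i)
    simp only [Jmat_mulVec, phaseWeight, Pi.mul_apply, Pi.smul_apply, Sum.elim_inl,
      Sum.elim_inr, smul_eq_mul] at h ⊢
    apply mul_left_cancel₀ hb
    linear_combination -h
  · have h := hgrad (Sum.inl i)
    simp only [Jmat_mulVec, phaseWeight, Pi.mul_apply, Pi.smul_apply, Sum.elim_inl,
      Sum.elim_inr, smul_eq_mul] at h ⊢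
    apply mul_left_cancel₀ ha
    linear_combination h

lemma Gamma2_phaseWeight_mul (m E ε : ℝ) (z : Fin 2 ⊕ Fin 2 → ℝ) :
    Gamma2 m (E / ε ^ 2) (phaseWeight ε 1 * z) = ε ^ 2 * Gamma2 m E z := by
  rcases eq_or_ne ε 0 with rfl | hε
  · simp [Gamma2, phaseWeight]
  have hsqrt : √((ε * z (Sum.inl 0)) ^ 4 + (ε * z (Sum.inl 1)) ^ 4)
      = ε ^ 2 * √(z (Sum.inl 0) ^ 4 + z (Sum.inl 1) ^ 4) := by
    rw [show (ε * z (Sum.inl 0)) ^ 4 + (ε * z (Sum.inl 1)) ^ 4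
        = (ε ^ 2) ^ 2 * (z (Sum.inl 0) ^ 4 + z (Sum.inl 1) ^ 4) by ring,
      sqrt_mul (by positivity), sqrt_sq (by positivity)]
  simp only [Gamma2, phaseWeight_mul, Sum.elim_inl, Sum.elim_inr, one_mul, hsqrt]
  rw [mul_div_mul_comm, ← mul_div_assoc]
  field_simp

theorem rescaled_orbit_is_solution_general (m E : ℝ)
    (I : Set ℝ) (γ : ℝ → (Fin 2 ⊕ Fin 2) → ℝ)
    (hγ : ∀ s ∈ I, HasDerivAt γ ((Jmat 2).mulVec (grad (Gamma2 m E) (γ s))) s)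
    (ε : ℝ) (hε : 0 < ε) :
    ∀ s : ℝ, ε * s ∈ I →
      HasDerivAt
        (fun t => (Sum.elim (fun i => ε * γ (ε * t) (Sum.inl i))
          (fun i => γ (ε * t) (Sum.inr i)) : (Fin 2 ⊕ Fin 2) → ℝ))
        ((Jmat 2).mulVec (grad (Gamma2 m (E / ε ^ 2))
          (Sum.elim (fun i => ε * γ (ε * s) (Sum.inl i))
            (fun i => γ (ε * s) (Sum.inr i)))))
        s := by
  intro s hs
  have hscale : ∀ z, Gamma2 m (E / ε ^ 2) (phaseWeight ε 1 * z) = ε * 1 * ε * Gamma2 m E z :=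
    fun z => by rw [Gamma2_phaseWeight_mul]; ring
  simpa only [phaseWeight_mul, one_mul] using
    hasDerivAt_phaseWeight_mul_comp_mul hε.ne' one_ne_zero hscale (hγ _ hs)

/-- If `γ(s) = (Q₁, Q₂, P₁, P₂)(s)` solves the Hamiltonian system `z' = J∇Γ_E(z)`
on an interval avoiding `Q₁ = Q₂ = 0`, then for every `ε > 0` the rescaled curve
`γ_ε(s) = (εQ₁(εs), εQ₂(εs), P₁(εs), P₂(εs))` solves `z' = J∇Γ_{E/ε²}(z)`. -/
theorem rescaled_orbit_is_solution (m E : ℝ) (hm : 0 < m)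
    (I : Set ℝ) (γ : ℝ → (Fin 2 ⊕ Fin 2) → ℝ)
    (havoid : ∀ s ∈ I, ¬(γ s (Sum.inl 0) = 0 ∧ γ s (Sum.inl 1) = 0))
    (hγ : ∀ s ∈ I, HasDerivAt γ ((Jmat 2).mulVec (grad (Gamma2 m E) (γ s))) s)
    (ε : ℝ) (hε : 0 < ε) :
    ∀ s : ℝ, ε * s ∈ I →
      HasDerivAt
        (fun t => (Sum.elim (fun i => ε * γ (ε * t) (Sum.inl i))
          (fun i => γ (ε * t) (Sum.inr i)) : (Fin 2 ⊕ Fin 2) → ℝ))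
        ((Jmat 2).mulVec (grad (Gamma2 m (E / ε ^ 2))
          (Sum.elim (fun i => ε * γ (ε * s) (Sum.inl i))
            (fun i => γ (ε * s) (Sum.inr i)))))
        s :=
  rescaled_orbit_is_solution_general m E I γ hγ ε hε
end
end

section
/- Let Γ : Ω → ℝ be C² on an open set Ω ⊆ ℝ^{2n}, J the standard 2n×2n symplectic matrix, and γ a T-periodic solution of z' = J∇Γ(z). Suppose S is an orthogonal 2n×2n matrix and N ∈ ℕ such that (i) γ(−s + T/N) = Sγ(s) for all s, (ii) Γ(Sz) = Γ(z) for all z ∈ Ω (with SΩ = Ω), and (iii) SJ = −JS. If X(s) is the fundamental matrix solution of the linearized equations ξ' = JD²Γ(γ(s))ξ with X(0) = I, then X(−s + T/N) = S X(s) Sᵀ X(T/N) for all s. -/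
open Matrix

noncomputable section

/-- The Hessian `D²f` of `f : (ι → ℝ) → ℝ` as a matrix of second partial derivatives. -/
def hessM {ι : Type*} [Fintype ι] [DecidableEq ι] (f : (ι → ℝ) → ℝ) (z : ι → ℝ) :
    Matrix ι ι ℝ :=
  Matrix.of fun i j => fderiv ℝ (fun w => fderiv ℝ f w (Pi.single j 1)) z (Pi.single i 1)

/-!
Both `s ↦ X(-s + T/N)` and `s ↦ S X(s) Sᵀ X(T/N)` solve the linear equation
`Y' = S J D²Γ(γ s) Sᵀ Y` and equal `X(T/N)` at `s = 0`, so they coincide by uniqueness for linear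
ODEs with continuous coefficients. For the first function this is the identity
`J D²Γ(γ(-s + T/N)) = J S D²Γ(γ s) Sᵀ = -S J D²Γ(γ s) Sᵀ`: differentiating `Γ ∘ S = Γ` twice near
`γ s` gives `D²Γ(S z) = S D²Γ(z) Sᵀ` for orthogonal `S`, and `JS = -SJ`.
-/

open Set Filter Topology

theorem ODE_solution_unique_of_linear {E : Type*} [NormedAddCommGroup E] [NormedSpace ℝ E]
    {A : ℝ → E →L[ℝ] E} (hA : Continuous A) {f g : ℝ → E}
    (hf : ∀ t, HasDerivAt f (A t (f t)) t) (hg : ∀ t, HasDerivAt g (A t (g t)) t)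
    {t₀ : ℝ} (heq : f t₀ = g t₀) : f = g := by
  funext t
  obtain ⟨a, b, ht, ht₀⟩ : ∃ a b, t ∈ Ioo a b ∧ t₀ ∈ Ioo a b :=
    ⟨min t t₀ - 1, max t t₀ + 1, by constructor <;> constructor <;> grind⟩
  obtain ⟨C, hC⟩ := isCompact_Icc.exists_bound_of_continuousOn (hA.continuousOn (s := Icc a b))
  have hlip : ∀ s ∈ Ioo a b, LipschitzOnWith C.toNNReal (A s) univ := fun s hs =>
    ((A s).lipschitz.weaken
      (NNReal.le_toNNReal_of_coe_le (hC s (Ioo_subset_Icc_self hs)))).lipschitzOnWith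
  exact ODE_solution_unique_of_mem_Ioo hlip ht₀ (fun s _ => ⟨hf s, trivial⟩)
    (fun s _ => ⟨hg s, trivial⟩) heq ht

section MatrixDeriv

variable {m n : Type*}

def HasMatrixDerivAt (X : ℝ → Matrix m n ℝ) (X' : Matrix m n ℝ) (t : ℝ) : Prop :=
  ∀ i j, HasDerivAt (fun s => X s i j) (X' i j) t

theorem HasMatrixDerivAt.comp_neg_add {X : ℝ → Matrix m n ℝ} {X' : Matrix m n ℝ} {t : ℝ}
    (c : ℝ) (h : HasMatrixDerivAt X X' (-t + c)) :
    HasMatrixDerivAt (fun s => X (-s + c)) (-X') t := fun i j => by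
  simpa [Function.comp_def] using (h i j).comp t ((hasDerivAt_id t).neg.add_const c)

theorem HasMatrixDerivAt.const_mul_mul {k l : Type*} [Fintype m] [Fintype n]
    {X : ℝ → Matrix m n ℝ} {X' : Matrix m n ℝ} {t : ℝ}
    (h : HasMatrixDerivAt X X' t) (P : Matrix k m ℝ) (Q : Matrix n l ℝ) :
    HasMatrixDerivAt (fun s => P * X s * Q) (P * X' * Q) t := fun i j => by
  simp only [Matrix.mul_apply]
  exact HasDerivAt.fun_sum fun b _ =>
    (HasDerivAt.fun_sum fun a _ => (h a b).const_mul (P i a)).mul_const (Q b j)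

theorem Matrix.ODE_solution_unique_of_linear [Fintype m] {M : ℝ → Matrix m m ℝ}
    (hM : Continuous M) {X Y : ℝ → Matrix m n ℝ} (hX : ∀ t, HasMatrixDerivAt X (M t * X t) t)
    (hY : ∀ t, HasMatrixDerivAt Y (M t * Y t) t) {t₀ : ℝ} (heq : X t₀ = Y t₀) : X = Y := by
  have hcol : ∀ Z : ℝ → Matrix m n ℝ, (∀ t, HasMatrixDerivAt Z (M t * Z t) t) → ∀ j t,
      HasDerivAt (fun s => (Z s)ᵀ j) ((M t).mulVecLin.toContinuousLinearMap ((Z t)ᵀ j)) t :=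
    fun Z hZ j t => hasDerivAt_pi.2 fun i => by
      simpa [Matrix.mul_apply, Matrix.mulVec, dotProduct] using hZ t i j
  have hA : Continuous fun t => (M t).mulVecLin.toContinuousLinearMap :=
    continuous_clm_apply.2 fun v => by simpa using hM.matrix_mulVec continuous_const
  funext t
  ext i j
  have hcol_eq := _root_.ODE_solution_unique_of_linear hA (hcol X hX j) (hcol Y hY j)
    (congrFun (congrArg transpose heq) j)
  exact congrFun (congrFun hcol_eq t) i

end MatrixDeriv

section Hessian

variable {ι : Type*} [Fintype ι] [DecidableEq ι] {f g : (ι → ℝ) → ℝ} {z : ι → ℝ}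

theorem fderiv_fderiv_apply_apply {E : Type*} [NormedAddCommGroup E] [NormedSpace ℝ E]
    {f : E → ℝ} {z : E} (hf : DifferentiableAt ℝ (fderiv ℝ f) z) (u v : E) :
    fderiv ℝ (fun w => fderiv ℝ f w v) z u = fderiv ℝ (fderiv ℝ f) z u v := by
  rw [fderiv_clm_apply hf (differentiableAt_const v)]
  simp

theorem hessM_eq_toMatrix₂' (hf : DifferentiableAt ℝ (fderiv ℝ f) z) :
    hessM f z = LinearMap.toMatrix₂' ℝ (fderiv ℝ (fderiv ℝ f) z).toLinearMap₁₂ := by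
  ext i j
  simp [hessM, fderiv_fderiv_apply_apply hf]

theorem hessM_congr_of_eventuallyEq (h : f =ᶠ[𝓝 z] g) : hessM f z = hessM g z := by
  ext i j
  have hpartial : (fun w => fderiv ℝ f w (Pi.single j 1)) =ᶠ[𝓝 z]
      fun w => fderiv ℝ g w (Pi.single j 1) :=
    (h.fderiv (𝕜 := ℝ)).mono fun w hw => by simp only [hw]
  simp only [hessM, of_apply, hpartial.fderiv_eq]

theorem hessM_comp_mulVec (S : Matrix ι ι ℝ) (hf : ContDiffAt ℝ 2 f (S *ᵥ z)) :
    hessM (fun w => f (S *ᵥ w)) z = Sᵀ * hessM f (S *ᵥ z) * S := by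
  set L : (ι → ℝ) →L[ℝ] ι → ℝ := S.mulVecLin.toContinuousLinearMap
  have hdiff : ∀ᶠ w in 𝓝 z, DifferentiableAt ℝ f (L w) :=
    L.continuous.continuousAt.eventually
      ((hf.eventually (by simp)).mono fun y hy => hy.differentiableAt (by simp))
  have hf2 : DifferentiableAt ℝ (fderiv ℝ f) (S *ᵥ z) :=
    (hf.fderiv_right (m := 1) (by norm_num)).differentiableAt (by simp)
  ext i j
  have hpartial : (fun w => fderiv ℝ (f ∘ L) w (Pi.single j 1)) =ᶠ[𝓝 z]
      (fun y => fderiv ℝ f y (L (Pi.single j 1))) ∘ L := by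
    filter_upwards [hdiff] with w hw
    simp [fderiv_comp (x := w) hw L.differentiableAt]
  calc hessM (f ∘ L) z i j
      = fderiv ℝ ((fun y => fderiv ℝ f y (L (Pi.single j 1))) ∘ L) z (Pi.single i 1) := by
        simp only [hessM, of_apply, hpartial.fderiv_eq]
    _ = fderiv ℝ (fderiv ℝ f) (S *ᵥ z) (L (Pi.single i 1)) (L (Pi.single j 1)) := by
        rw [fderiv_comp (f := L) z (hf2.clm_apply (differentiableAt_const _)) L.differentiableAt,
          L.fderiv]
        exact fderiv_fderiv_apply_apply hf2 _ _
    _ = (Sᵀ * hessM f (S *ᵥ z) * S) i j := by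
        rw [hessM_eq_toMatrix₂' hf2, ← LinearMap.toMatrix'_toLin' S,
          ← LinearMap.toMatrix₂'_compl₁₂]
        simp [LinearMap.toMatrix₂'_apply, L]

theorem hessM_mulVec_of_invariant {S : Matrix ι ι ℝ} (hS : S * Sᵀ = 1)
    (hf : ContDiffAt ℝ 2 f (S *ᵥ z)) (hinv : (fun w => f (S *ᵥ w)) =ᶠ[𝓝 z] f) :
    hessM f (S *ᵥ z) = S * hessM f z * Sᵀ := by
  rw [← hessM_congr_of_eventuallyEq hinv, hessM_comp_mulVec S hf, ← Matrix.mul_assoc,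
    ← Matrix.mul_assoc, hS, Matrix.one_mul, Matrix.mul_assoc, hS, Matrix.mul_one]

theorem continuousOn_hessM {Ω : Set (ι → ℝ)} (hΩ : IsOpen Ω) (hf : ContDiffOn ℝ 2 f Ω) :
    ContinuousOn (hessM f) Ω :=
  continuousOn_pi.2 fun _ => continuousOn_pi.2 fun j =>
    ((((hf.fderiv_of_isOpen hΩ (by norm_num)).clm_apply contDiffOn_const)
      |>.continuousOn_fderiv_of_isOpen hΩ le_rfl).clm_apply continuousOn_const)

end Hessian

theorem roberts_time_reversing_lemma_general (n : ℕ)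
    (Ω : Set ((Fin n ⊕ Fin n) → ℝ)) (hΩ : IsOpen Ω)
    (Γ : ((Fin n ⊕ Fin n) → ℝ) → ℝ) (hΓ : ContDiffOn ℝ 2 Γ Ω)
    (T : ℝ)
    (γ : ℝ → (Fin n ⊕ Fin n) → ℝ) (hmem : ∀ s, γ s ∈ Ω)
    (hsol : ∀ s : ℝ, HasDerivAt γ ((Jmat n).mulVec (grad Γ (γ s))) s)
    (S : Matrix (Fin n ⊕ Fin n) (Fin n ⊕ Fin n) ℝ)
    (hSorth : Sᵀ * S = 1)
    (N : ℕ)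
    (hsymm : ∀ s : ℝ, γ (-s + T / (N : ℝ)) = S.mulVec (γ s))
    (hSinv : ∀ z ∈ Ω, Γ (S.mulVec z) = Γ z)
    (hSJ : S * Jmat n = -(Jmat n * S))
    (X : ℝ → Matrix (Fin n ⊕ Fin n) (Fin n ⊕ Fin n) ℝ)
    (hX0 : X 0 = 1)
    (hX : ∀ (s : ℝ) (i j : Fin n ⊕ Fin n),
      HasDerivAt (fun t => X t i j) ((Jmat n * hessM Γ (γ s) * X s) i j) s) :
    ∀ s : ℝ, X (-s + T / (N : ℝ)) = S * X s * Sᵀ * X (T / (N : ℝ)) := by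
  set c := T / (N : ℝ)
  set J := Jmat n
  have hSSt : S * Sᵀ = 1 := mul_eq_one_comm.mp hSorth
  have hJS : J * S = -(S * J) := by rw [hSJ, neg_neg]
  have hH : Continuous fun s => hessM Γ (γ s) := (continuousOn_hessM hΩ hΓ).comp_continuous
    (continuous_iff_continuousAt.2 fun s => (hsol s).continuousAt) hmem
  have hH_reverse : ∀ s, hessM Γ (γ (-s + c)) = S * hessM Γ (γ s) * Sᵀ := fun s => by
    rw [hsymm]
    exact hessM_mulVec_of_invariant hSSt (hΓ.contDiffAt (hΩ.mem_nhds (hsymm s ▸ hmem _)))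
      (eventually_of_mem (hΩ.mem_nhds (hmem s)) hSinv)
  set M := fun s => S * (J * hessM Γ (γ s)) * Sᵀ
  have hM : Continuous M := by fun_prop
  have hreversed : ∀ s, HasMatrixDerivAt (fun t => X (-t + c)) (M s * X (-s + c)) s := fun s => by
    convert HasMatrixDerivAt.comp_neg_add c (hX (-s + c)) using 1
    rw [hH_reverse, ← Matrix.mul_assoc, ← Matrix.mul_assoc, hJS]
    simp only [M, Matrix.neg_mul, neg_neg, Matrix.mul_assoc]
  have hconjugated : ∀ s, HasMatrixDerivAt (fun t => S * X t * (Sᵀ * X c))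
      (M s * (S * X s * (Sᵀ * X c))) s := fun s => by
    convert HasMatrixDerivAt.const_mul_mul (hX s) S (Sᵀ * X c) using 1
    simp only [M, Matrix.mul_assoc]
    rw [← Matrix.mul_assoc Sᵀ S, hSorth, Matrix.one_mul]
  have hsol_eq := Matrix.ODE_solution_unique_of_linear hM hreversed hconjugated (t₀ := 0)
    (by simp [hX0, ← Matrix.mul_assoc, hSSt])
  intro s
  simpa [Matrix.mul_assoc] using congrFun hsol_eq s

/-- Roberts' time-reversing symmetry lemma: if `γ` is a `T`-periodic solution of
`z' = J∇Γ(z)` with time-reversing symmetry `S` (orthogonal, `Γ∘S = Γ`,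
`SJ = −JS`, `γ(−s + T/N) = Sγ(s)`), and `X` is the fundamental matrix solution
of the linearization `ξ' = JD²Γ(γ(s))ξ`, `X(0) = I`, then
`X(−s + T/N) = S X(s) Sᵀ X(T/N)` for all `s`. -/
theorem roberts_time_reversing_lemma (n : ℕ)
    (Ω : Set ((Fin n ⊕ Fin n) → ℝ)) (hΩ : IsOpen Ω)
    (Γ : ((Fin n ⊕ Fin n) → ℝ) → ℝ) (hΓ : ContDiffOn ℝ 2 Γ Ω)
    (T : ℝ) (hT : 0 < T)
    (γ : ℝ → (Fin n ⊕ Fin n) → ℝ) (hmem : ∀ s, γ s ∈ Ω)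
    (hsol : ∀ s : ℝ, HasDerivAt γ ((Jmat n).mulVec (grad Γ (γ s))) s)
    (hper : Function.Periodic γ T)
    (S : Matrix (Fin n ⊕ Fin n) (Fin n ⊕ Fin n) ℝ)
    (hSorth : Sᵀ * S = 1)
    (N : ℕ) (hN : 0 < N)
    (hsymm : ∀ s : ℝ, γ (-s + T / (N : ℝ)) = S.mulVec (γ s))
    (hSΩ : S.mulVec '' Ω = Ω)
    (hSinv : ∀ z ∈ Ω, Γ (S.mulVec z) = Γ z)
    (hSJ : S * Jmat n = -(Jmat n * S))
    (X : ℝ → Matrix (Fin n ⊕ Fin n) (Fin n ⊕ Fin n) ℝ)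
    (hX0 : X 0 = 1)
    (hX : ∀ (s : ℝ) (i j : Fin n ⊕ Fin n),
      HasDerivAt (fun t => X t i j) ((Jmat n * hessM Γ (γ s) * X s) i j) s) :
    ∀ s : ℝ, X (-s + T / (N : ℝ)) = S * X s * Sᵀ * X (T / (N : ℝ)) :=
  roberts_time_reversing_lemma_general n Ω hΩ Γ hΓ T γ hmem hsol S hSorth N hsymm hSinv hSJ X hX0 hX
end
end

section
/- Let S, Y₀, A, C be invertible real matrices of the same size with S² = I and Sᵀ = S. Suppose C = S Y₀ A⁻¹ S A (the factorization of Y(T/2) through B = Y(T/4) = A) and suppose Y(T) := S Y₀ C⁻¹ S C. Then Y₀⁻¹ Y(T) = W², where W = Y₀⁻¹ S Y₀ A⁻¹ S A. -/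
/-! In any group with an involution `S`, applying the symmetry factorization twice collapses:
`S Y₀ C⁻¹ S = C Y₀⁻¹` for `C = S Y₀ A⁻¹ S A`, so `Y(T) = C Y₀⁻¹ C` and `Y₀⁻¹ Y(T) = (Y₀⁻¹ C)²`. -/

section DoubleBySymmetry

variable {G : Type*} [Group G]

/-- The symmetry corollary `Y(2t) = S Y₀ Y(t)⁻¹ S Y(t)`, as a function of `Y(t)`. -/
def doubleBySymmetry (S Y X : G) : G := S * Y * X⁻¹ * S * X

variable {S : G}

theorem doubleBySymmetry_doubleBySymmetry (hS : S * S = 1) (Y A : G) :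
    doubleBySymmetry S Y (doubleBySymmetry S Y A) =
      doubleBySymmetry S Y A * Y⁻¹ * doubleBySymmetry S Y A := by
  have hSinv : S⁻¹ = S := inv_eq_of_mul_eq_one_right hS
  have hSS (x : G) : S * (S * x) = x := by rw [← mul_assoc, hS, one_mul]
  simp only [doubleBySymmetry, mul_inv_rev, inv_inv, hSinv, mul_assoc, hSS]

theorem inv_mul_doubleBySymmetry_doubleBySymmetry (hS : S * S = 1) (Y A : G) :
    Y⁻¹ * doubleBySymmetry S Y (doubleBySymmetry S Y A) = (Y⁻¹ * doubleBySymmetry S Y A) ^ 2 := by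
  rw [doubleBySymmetry_doubleBySymmetry hS, sq]
  group

end DoubleBySymmetry

open Matrix

theorem monodromy_is_W_squared_general (k : ℕ)
    (S Y₀ A C : Matrix (Fin k) (Fin k) ℝ)
    (hY₀ : IsUnit Y₀) (hA : IsUnit A)
    (hS2 : S * S = 1)
    (hCdef : C = S * Y₀ * A⁻¹ * S * A) :
    Y₀⁻¹ * (S * Y₀ * C⁻¹ * S * C) = (Y₀⁻¹ * S * Y₀ * A⁻¹ * S * A) ^ 2 := by
  obtain ⟨y, rfl⟩ := hY₀
  obtain ⟨a, rfl⟩ := hA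
  let s : (Matrix (Fin k) (Fin k) ℝ)ˣ := ⟨S, S, hS2, hS2⟩
  have hUnits := congrArg Units.val
    (inv_mul_doubleBySymmetry_doubleBySymmetry (S := s) (Units.ext hS2) y a)
  subst hCdef
  simpa only [doubleBySymmetry, Units.val_mul, Units.val_pow_eq_pow_val, Matrix.coe_units_inv,
    mul_assoc] using hUnits

/-- The matrix-algebra step expressing the monodromy-type matrix `Y₀⁻¹ Y(T)` of a
periodic orbit with two time-reversing symmetries `S`, `−S` (with `S` symmetric,
`S² = I`) as the square of `W = Y₀⁻¹ S Y₀ A⁻¹ S A`, where `A = Y(T/4)`,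
`C = Y(T/2) = S Y₀ A⁻¹ S A` and `Y(T) = S Y₀ C⁻¹ S C`. -/
theorem monodromy_is_W_squared (k : ℕ)
    (S Y₀ A C : Matrix (Fin k) (Fin k) ℝ)
    (hS : IsUnit S) (hY₀ : IsUnit Y₀) (hA : IsUnit A) (hC : IsUnit C)
    (hS2 : S * S = 1) (hSsymm : Sᵀ = S)
    (hCdef : C = S * Y₀ * A⁻¹ * S * A) :
    Y₀⁻¹ * (S * Y₀ * C⁻¹ * S * C) = (Y₀⁻¹ * S * Y₀ * A⁻¹ * S * A) ^ 2 :=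
  monodromy_is_W_squared_general k S Y₀ A C hY₀ hA hS2 hCdef
end

section
/- Let n ∈ ℕ, let B be a 2n×2n real symplectic matrix with n×n blocks B = [[B₁,B₂],[B₃,B₄]], let S₁ be a symmetric n×n matrix with S₁² = I, set S = diag(S₁, −S₁) and Λ = diag(I, −I) (2n×2n block matrices), D = −B⁻¹SB, and W = ΛD. Then W is invertible with W⁻¹ = DΛ, and there exists an n×n real matrix K such that (1/2)(W + W⁻¹) = [[Kᵀ, 0],[0, K]]. -/
open Matrix

noncomputable section

/-!
`D = -B⁻¹SB` is an involution, and so is `Λ`; hence `W = ΛD` is invertible with inverse `DΛ`,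
and `(W + W⁻¹)/2 = (ΛD + DΛ)/2 = diag(D₁₁, -D₂₂)`. Moreover `S = diag(S₁, -S₁ᵀ)` is Hamiltonian
(skew-adjoint for the symplectic form), and conjugating by the symplectic `B` keeps it Hamiltonian.
The diagonal blocks of a Hamiltonian matrix satisfy `D₁₁ᵀ = -D₂₂`, so `K = -D₂₂` works.
-/

theorem Jmat_eq_neg_J (n : ℕ) : Jmat n = -J (Fin n) ℝ := by
  simp [Jmat, J, fromBlocks_neg]

theorem mem_symplecticGroup_iff_transpose_mul_Jmat_mul {n : ℕ}
    {B : Matrix (Fin n ⊕ Fin n) (Fin n ⊕ Fin n) ℝ} :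
    B ∈ symplecticGroup (Fin n) ℝ ↔ Bᵀ * Jmat n * B = Jmat n := by
  rw [SymplecticGroup.mem_iff', Jmat_eq_neg_J, mul_neg, neg_mul, neg_inj]

namespace Matrix

variable {l R : Type*} [Fintype l] [DecidableEq l] [CommRing R]

theorem fromBlocks_neg_mul_self {A : Matrix l l R} (hA : A * A = 1) :
    fromBlocks A 0 0 (-A) * fromBlocks A 0 0 (-A) = 1 := by
  simp [fromBlocks_multiply, hA]

theorem conj_mul_self_eq_one {A P : Matrix l l R} (hP : IsUnit P.det) (hA : A * A = 1) :
    (P⁻¹ * A * P) * (P⁻¹ * A * P) = 1 :=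
  calc (P⁻¹ * A * P) * (P⁻¹ * A * P) = P⁻¹ * A * (P * P⁻¹) * A * P := by noncomm_ring
    _ = 1 := by rw [mul_nonsing_inv P hP, mul_one, mul_assoc P⁻¹, hA, mul_one,
      nonsing_inv_mul P hP]

theorem IsSkewAdjoint.conj {J A P : Matrix l l R} (hP : Pᵀ * J * P = J) (hPu : IsUnit P.det)
    (hA : J.IsSkewAdjoint A) : J.IsSkewAdjoint (P⁻¹ * A * P) := by
  have h := J.isAdjointPair_equiv (P⁻¹ * A * P) (-(P⁻¹ * A * P)) P
    ((isUnit_iff_isUnit_det P).mpr hPu)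
  rw [hP] at h
  refine h.mpr ?_
  have hcancel : ∀ X : Matrix l l R, P * (P⁻¹ * X * P) * P⁻¹ = X := fun X => by
    rw [← mul_assoc, ← mul_assoc, mul_nonsing_inv P hPu, one_mul, mul_assoc,
      mul_nonsing_inv P hPu, mul_one]
  rw [hcancel, ← neg_mul, ← mul_neg, hcancel]
  exact hA

theorem IsSkewAdjoint.neg {J A : Matrix l l R} (hA : J.IsSkewAdjoint A) : J.IsSkewAdjoint (-A) :=
  (mem_skewAdjointMatricesSubmodule J _).mp <|
    neg_mem ((mem_skewAdjointMatricesSubmodule J A).mpr hA)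

theorem isSkewAdjoint_J_fromBlocks (A : Matrix l l R) :
    (J l R).IsSkewAdjoint (fromBlocks A 0 0 (-Aᵀ)) := by
  simp [Matrix.IsSkewAdjoint, Matrix.IsAdjointPair, J, fromBlocks_transpose, fromBlocks_multiply,
    fromBlocks_neg]

theorem IsSkewAdjoint.toBlocks₁₁_transpose {M : Matrix (l ⊕ l) (l ⊕ l) R}
    (hM : (J l R).IsSkewAdjoint M) : M.toBlocks₁₁ᵀ = -M.toBlocks₂₂ := by
  have h := congrArg toBlocks₁₂ hM
  rw [← fromBlocks_toBlocks M] at h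
  simpa [J, fromBlocks_transpose, fromBlocks_multiply, fromBlocks_neg, neg_eq_iff_eq_neg] using h

theorem one_half_smul_fromBlocks_one_neg_one_mul_add {K : Type*} [Field K] [NeZero (2 : K)]
    (M : Matrix (l ⊕ l) (l ⊕ l) K) :
    (1 / 2 : K) • (fromBlocks 1 0 0 (-1) * M + M * fromBlocks 1 0 0 (-1)) =
      fromBlocks M.toBlocks₁₁ 0 0 (-M.toBlocks₂₂) := by
  conv_lhs => rw [← fromBlocks_toBlocks M]
  rw [fromBlocks_multiply, fromBlocks_multiply, fromBlocks_add, fromBlocks_smul]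
  congr 1 <;> simp [← two_smul K, smul_smul, inv_mul_cancel₀ (two_ne_zero' K)]

end Matrix

/-- For a symplectic `B`, a symmetric `S₁` with `S₁² = I`, `S = diag(S₁, −S₁)`,
`Λ = diag(I, −I)`, `D = −B⁻¹SB` and `W = ΛD`: `W` is invertible with
`W⁻¹ = DΛ`, and `(W + W⁻¹)/2` has the block-diagonal form `diag(Kᵀ, K)` for some
`n × n` real matrix `K`. -/
theorem W_block_structure (n : ℕ)
    (B : Matrix (Fin n ⊕ Fin n) (Fin n ⊕ Fin n) ℝ)
    (hB : Bᵀ * Jmat n * B = Jmat n)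
    (S₁ : Matrix (Fin n) (Fin n) ℝ) (hS₁symm : S₁ᵀ = S₁) (hS₁sq : S₁ * S₁ = 1) :
    IsUnit ((Matrix.fromBlocks 1 0 0 (-1) : Matrix (Fin n ⊕ Fin n) (Fin n ⊕ Fin n) ℝ) *
      (-(B⁻¹ * Matrix.fromBlocks S₁ 0 0 (-S₁) * B))) ∧
    ((Matrix.fromBlocks 1 0 0 (-1) : Matrix (Fin n ⊕ Fin n) (Fin n ⊕ Fin n) ℝ) *
      (-(B⁻¹ * Matrix.fromBlocks S₁ 0 0 (-S₁) * B)))⁻¹ =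
      (-(B⁻¹ * Matrix.fromBlocks S₁ 0 0 (-S₁) * B)) *
        (Matrix.fromBlocks 1 0 0 (-1) : Matrix (Fin n ⊕ Fin n) (Fin n ⊕ Fin n) ℝ) ∧
    ∃ K : Matrix (Fin n) (Fin n) ℝ,
      (1 / 2 : ℝ) •
        ((Matrix.fromBlocks 1 0 0 (-1) : Matrix (Fin n ⊕ Fin n) (Fin n ⊕ Fin n) ℝ) *
            (-(B⁻¹ * Matrix.fromBlocks S₁ 0 0 (-S₁) * B)) +
          ((Matrix.fromBlocks 1 0 0 (-1) : Matrix (Fin n ⊕ Fin n) (Fin n ⊕ Fin n) ℝ) *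
            (-(B⁻¹ * Matrix.fromBlocks S₁ 0 0 (-S₁) * B)))⁻¹) =
        Matrix.fromBlocks Kᵀ 0 0 K := by
  set Λ : Matrix (Fin n ⊕ Fin n) (Fin n ⊕ Fin n) ℝ := fromBlocks 1 0 0 (-1)
  set D := -(B⁻¹ * fromBlocks S₁ 0 0 (-S₁) * B)
  have hBsymp := mem_symplecticGroup_iff_transpose_mul_Jmat_mul.mpr hB
  have hBdet : IsUnit B.det := SymplecticGroup.symplectic_det hBsymp
  have hΛ : Λ * Λ = 1 := fromBlocks_neg_mul_self (one_mul 1)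
  have hD : D * D = 1 := by
    rw [neg_mul_neg]
    exact conj_mul_self_eq_one hBdet (fromBlocks_neg_mul_self hS₁sq)
  have hD_hamiltonian : (J (Fin n) ℝ).IsSkewAdjoint D := by
    have hS := isSkewAdjoint_J_fromBlocks S₁
    rw [hS₁symm] at hS
    exact (hS.conj (SymplecticGroup.mem_iff'.mp hBsymp) hBdet).neg
  have hWinv : (Λ * D)⁻¹ = D * Λ := by
    rw [Matrix.mul_inv_rev, inv_eq_left_inv hΛ, inv_eq_left_inv hD]
  refine ⟨(IsUnit.of_mul_eq_one _ hΛ).mul (IsUnit.of_mul_eq_one _ hD), hWinv, -D.toBlocks₂₂, ?_⟩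
  rw [hWinv, one_half_smul_fromBlocks_one_neg_one_mul_add,
    ← hD_hamiltonian.toBlocks₁₁_transpose, transpose_transpose]
end
end

section
/- Let ζ ≠ 0 and let K be a real 4×4 matrix of the form [[−1,0,0,k₁₄],[0,a,b,0],[0,c,d,0],[0,0,0,e]]. If the row vector u = (0, −ζ, √8, 0) satisfies uKᵀ = −u, then b = (a + 1)ζ/√8 and c = (d + 1)√8/ζ. In particular, −1 is an eigenvalue of the central 2×2 block [[a,b],[c,d]], and all eigenvalues of K are real. -/
/-!
Since `uKᵀ = Ku` for the transpose, angular momentum says that `(−ζ, √8)` is an eigenvector of the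
central block with eigenvalue `−1`; its two coordinates give the formulas for `b` and `c`. The other
eigenvalue of the block is then `a + d + 1` (the trace plus one), and the characteristic polynomial
of `K` factors as `(μ + 1)² (μ − e) (μ − (a + d + 1))`, so every eigenvalue of `K` is real.
-/

open Matrix

namespace Matrix

theorem det_smul_one_sub_eq_zero_of_mulVec_eq_smul {n R : Type*} [Fintype n] [DecidableEq n]
    [CommRing R] [IsDomain R] {M : Matrix n n R} {v : n → R} {μ : R} (hv : v ≠ 0)
    (hMv : M *ᵥ v = μ • v) : (μ • (1 : Matrix n n R) - M).det = 0 :=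
  exists_mulVec_eq_zero_iff.mp
    ⟨v, hv, by rw [sub_mulVec, smul_mulVec, one_mulVec, hMv, sub_self]⟩

variable {R : Type*} [CommRing R]

theorem det_smul_one_sub_fin_two_of (μ a b c d : R) :
    (μ • (1 : Matrix (Fin 2) (Fin 2) R) - !![a, b; c, d]).det = (μ - a) * (μ - d) - b * c := by
  simp [det_fin_two]

theorem det_smul_one_sub_fin_four_of_block (μ x k a b c d e : R) :
    (μ • (1 : Matrix (Fin 4) (Fin 4) R) -
        !![x, 0, 0, k; 0, a, b, 0; 0, c, d, 0; 0, 0, 0, e]).det =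
      (μ - x) * (μ - e) * ((μ - a) * (μ - d) - b * c) := by
  simp [det_succ_row_zero, Fin.sum_univ_succ, one_apply, Fin.succAbove]
  ring

end Matrix

theorem im_eq_zero_of_mulVec_eq_smul_of_block (a b c d e k : ℝ) (hbc : b * c = (a + 1) * (d + 1))
    {μ : ℂ} {v : Fin 4 → ℂ} (hv : v ≠ 0)
    (hKv : (!![-1, 0, 0, k; 0, a, b, 0; 0, c, d, 0; 0, 0, 0, e]).map Complex.ofReal *ᵥ v = μ • v) :
    μ.im = 0 := by
  have hKℂ : (!![-1, 0, 0, k; 0, a, b, 0; 0, c, d, 0; 0, 0, 0, e]).map Complex.ofReal =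
      !![-1, 0, 0, (k : ℂ); 0, ↑a, ↑b, 0; 0, ↑c, ↑d, 0; 0, 0, 0, ↑e] := by
    ext i j; fin_cases i <;> fin_cases j <;> simp
  have hdet := det_smul_one_sub_eq_zero_of_mulVec_eq_smul hv hKv
  rw [hKℂ, det_smul_one_sub_fin_four_of_block] at hdet
  have hbcℂ : (b * c : ℂ) = (a + 1) * (d + 1) := by exact_mod_cast hbc
  have hroots : (μ + 1) * (μ - e) * ((μ + 1) * (μ - (a + d + 1))) = 0 := by
    linear_combination hdet + (μ + 1) * (μ - e) * hbcℂ
  simp only [mul_eq_zero, add_eq_zero_iff_eq_neg, sub_eq_zero] at hroots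
  rcases hroots with (rfl | rfl) | rfl | rfl <;> simp

/-- For `K` of the reduced form `[[−1,0,0,k₁₄],[0,a,b,0],[0,c,d,0],[0,0,0,e]]`,
if the row vector `u = (0, −ζ, √8, 0)` (with `ζ ≠ 0`) satisfies `uKᵀ = −u`, then
`b = (a+1)ζ/√8` and `c = (d+1)√8/ζ`; in particular `−1` is an eigenvalue of the
central block `[[a,b],[c,d]]`, and all (complex) eigenvalues of `K` are real. -/
theorem angular_momentum_eigenvalue_relations
    (ζ a b c d e k₁₄ : ℝ) (hζ : ζ ≠ 0)
    (K : Matrix (Fin 4) (Fin 4) ℝ)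
    (hK : K = !![-1, 0, 0, k₁₄; 0, a, b, 0; 0, c, d, 0; 0, 0, 0, e])
    (hu : Matrix.vecMul (![0, -ζ, Real.sqrt 8, 0] : Fin 4 → ℝ) Kᵀ =
      -(![0, -ζ, Real.sqrt 8, 0] : Fin 4 → ℝ)) :
    b = (a + 1) * ζ / Real.sqrt 8 ∧
    c = (d + 1) * Real.sqrt 8 / ζ ∧
    (∃ w : Fin 2 → ℝ, w ≠ 0 ∧ (!![a, b; c, d]).mulVec w = (-1 : ℝ) • w) ∧
    (∀ μ : ℂ, (∃ v : Fin 4 → ℂ, v ≠ 0 ∧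
        (K.map (Complex.ofReal)).mulVec v = μ • v) → μ.im = 0) := by
  subst hK
  rw [vecMul_transpose] at hu
  have hu₁ : a * -ζ + b * √8 = ζ := by
    simpa [mulVec, dotProduct, Fin.sum_univ_four] using congrFun hu 1
  have hu₂ : c * -ζ + d * √8 = -√8 := by
    simpa [mulVec, dotProduct, Fin.sum_univ_four] using congrFun hu 2
  have h8 : √8 ≠ 0 := by positivity
  set w : Fin 2 → ℝ := ![-ζ, √8]
  have hw : w ≠ 0 := fun h => h8 (by simpa [w] using congrFun h 1)
  have hMw : !![a, b; c, d] *ᵥ w = (-1 : ℝ) • w := by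
    ext i; fin_cases i <;> simp [w, mulVec, dotProduct] <;> linarith
  have hbc : b * c = (a + 1) * (d + 1) := by
    have hdet := det_smul_one_sub_eq_zero_of_mulVec_eq_smul hw hMw
    rw [det_smul_one_sub_fin_two_of] at hdet
    linear_combination -hdet
  refine ⟨by field_simp; linarith, by field_simp; linarith, ⟨w, hw, hMw⟩, ?_⟩
  rintro μ ⟨v, hv, hKv⟩
  exact im_eq_zero_of_mulVec_eq_smul_of_block a b c d e k₁₄ hbc hv hKv
end

section
/- Let m ∈ (0,1], α > 0, and x₂ > 0, and set x₁ = αx₂. If the homographic condition ẍ₁ = αẍ₂ holds for the rhomboidal equations of motion, i.e. if −1/(4x₁²) − 2m x₁/(x₁²+x₂²)^{3/2} = α(−m/(4x₂²) − 2x₂/(x₁²+x₂²)^{3/2}), then α is a root of the polynomial equation (1+α²)³(mα³ − 1)² − 64α⁶(1−m)² = 0. -/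
/-!
Writing `x₁ = α x₂`, the common denominator is `(x₁² + x₂²)^{3/2} = x₂³ t` with
`t = (1 + α²)^{3/2}`. Clearing denominators, the homographic condition becomes the relation
`(m α³ - 1) t = 8 α³ (m - 1)`, linear in `t`; squaring it and using `t² = (1 + α²)³`
removes the irrationality.
-/

namespace Rhomboidal

lemma rpow_three_halves_sq {a : ℝ} (ha : 0 ≤ a) : (a ^ ((3 : ℝ) / 2)) ^ 2 = a ^ 3 := by
  rw [← Real.rpow_natCast _ 2, ← Real.rpow_mul ha]
  norm_num

lemma sq_mul_rpow_three_halves {x a : ℝ} (hx : 0 ≤ x) (ha : 0 ≤ a) :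
    (x ^ 2 * a) ^ ((3 : ℝ) / 2) = x ^ 3 * a ^ ((3 : ℝ) / 2) := by
  rw [Real.mul_rpow (by positivity) ha, ← Real.rpow_natCast x 2, ← Real.rpow_mul hx]
  norm_num

lemma mul_sq_add_sq_rpow_three_halves {α x : ℝ} (hx : 0 ≤ x) :
    ((α * x) ^ 2 + x ^ 2) ^ ((3 : ℝ) / 2) = x ^ 3 * (1 + α ^ 2) ^ ((3 : ℝ) / 2) := by
  rw [show (α * x) ^ 2 + x ^ 2 = x ^ 2 * (1 + α ^ 2) by ring]
  exact sq_mul_rpow_three_halves hx (by positivity)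

lemma linear_relation_of_homographic {m α x t : ℝ} (hα : α ≠ 0) (hx : x ≠ 0) (ht : t ≠ 0)
    (h : -1 / (4 * (α * x) ^ 2) - 2 * m * (α * x) / (x ^ 3 * t) =
      α * (-m / (4 * x ^ 2) - 2 * x / (x ^ 3 * t))) :
    (m * α ^ 3 - 1) * t = 8 * α ^ 3 * (m - 1) := by
  field_simp at h
  linear_combination h

lemma polynomial_eq_zero_of_linear_relation {m α t : ℝ} (ht : t ^ 2 = (1 + α ^ 2) ^ 3)
    (h : (m * α ^ 3 - 1) * t = 8 * α ^ 3 * (m - 1)) :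
    (1 + α ^ 2) ^ 3 * (m * α ^ 3 - 1) ^ 2 - 64 * α ^ 6 * (1 - m) ^ 2 = 0 := by
  linear_combination ((m * α ^ 3 - 1) * t + 8 * α ^ 3 * (m - 1)) * h - (m * α ^ 3 - 1) ^ 2 * ht

end Rhomboidal

theorem homographic_alpha_polynomial_general (m α x₁ x₂ : ℝ)
    (hα : 0 < α) (hx₂ : 0 < x₂)
    (hx₁ : x₁ = α * x₂)
    (heq : -1 / (4 * x₁ ^ 2) - 2 * m * x₁ / ((x₁ ^ 2 + x₂ ^ 2) ^ ((3 : ℝ) / 2)) =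
      α * (-m / (4 * x₂ ^ 2) - 2 * x₂ / ((x₁ ^ 2 + x₂ ^ 2) ^ ((3 : ℝ) / 2)))) :
    (1 + α ^ 2) ^ 3 * (m * α ^ 3 - 1) ^ 2 - 64 * α ^ 6 * (1 - m) ^ 2 = 0 := by
  subst hx₁
  rw [Rhomboidal.mul_sq_add_sq_rpow_three_halves hx₂.le] at heq
  exact Rhomboidal.polynomial_eq_zero_of_linear_relation
    (Rhomboidal.rpow_three_halves_sq (by positivity))
    (Rhomboidal.linear_relation_of_homographic hα.ne' hx₂.ne'
      (Real.rpow_pos_of_pos (by positivity) _).ne' heq)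

/-- If the homographic condition `ẍ₁ = αẍ₂` holds for the rhomboidal equations of
motion with `x₁ = αx₂`, then `α` is a root of
`(1+α²)³(mα³ − 1)² − 64α⁶(1−m)² = 0`. -/
theorem homographic_alpha_polynomial (m α x₁ x₂ : ℝ)
    (hm : m ∈ Set.Ioc (0 : ℝ) 1) (hα : 0 < α) (hx₂ : 0 < x₂)
    (hx₁ : x₁ = α * x₂)
    (heq : -1 / (4 * x₁ ^ 2) - 2 * m * x₁ / ((x₁ ^ 2 + x₂ ^ 2) ^ ((3 : ℝ) / 2)) =
      α * (-m / (4 * x₂ ^ 2) - 2 * x₂ / ((x₁ ^ 2 + x₂ ^ 2) ^ ((3 : ℝ) / 2)))) :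
    (1 + α ^ 2) ^ 3 * (m * α ^ 3 - 1) ^ 2 - 64 * α ^ 6 * (1 - m) ^ 2 = 0 :=
  homographic_alpha_polynomial_general m α x₁ x₂ hα hx₂ hx₁ heq
end
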